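/- arXiv:0908.3436 — 3 statements merged into one kernel-verified Lean document; each statement's English description precedes it below -/
import Mathlib

section
/- Let 0 < α < 1 and define C_0 = 1 and C_k the unique positive solution of C_k + C_k^{1-α} = C_{k-1}^{1-α} for k ≥ 1. Then k^{1/α} · C_k tends to c_α = ((1-α)/α)^{1/α} as k → ∞. -/
/-!
Put `D k = C k ^ (-α)` and `β = α / (1 - α)`. Raising the recursion to the power `-β` gives
`D (k - 1) = D k (1 + t)^(-β)` with `t = C k ^ α = 1 / D k`, so
`D k - D (k - 1) = (1 - (1 + t)^(-β)) / t`. The recursion also telescopes to `∑ C k < ∞`,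
hence `t → 0` and the increments of `D` tend to the derivative `β` of `t ↦ -(1 + t)^(-β)` at `0`.
By Cesàro `D k / k → β`, i.e. `k^(1/α) C k = (D k / k)^(-1/α) → β^(-1/α)`.
-/

open Real Filter Topology Finset

theorem tendsto_one_sub_one_add_rpow_neg_div (β : ℝ) :
    Tendsto (fun t : ℝ => (1 - (1 + t) ^ (-β)) / t) (𝓝[≠] 0) (𝓝 β) := by
  have hderiv : HasDerivAt (fun t : ℝ => (1 + t) ^ (-β)) (-β) 0 := by
    simpa using ((hasDerivAt_id (0 : ℝ)).const_add 1).rpow_const (p := -β) (by norm_num)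
  refine neg_neg β ▸ (hasDerivAt_iff_tendsto_slope.mp hderiv).neg.congr' ?_
  filter_upwards with t
  simp [slope_def_field, sub_div]

theorem tendsto_div_natCast_of_tendsto_sub {u : ℕ → ℝ} {l : ℝ}
    (h : Tendsto (fun n => u (n + 1) - u n) atTop (𝓝 l)) :
    Tendsto (fun n : ℕ => u n / n) atTop (𝓝 l) := by
  have hmean : Tendsto (fun n : ℕ => (u n - u 0) / n) atTop (𝓝 l) := by
    refine h.cesaro.congr fun n => ?_
    rw [sum_range_sub, inv_mul_eq_div]
  have hinit : Tendsto (fun n : ℕ => u 0 / n) atTop (𝓝 0) :=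
    tendsto_const_div_atTop_nhds_zero_nat (u 0)
  simpa [← add_div] using hmean.add hinit

theorem tendsto_zero_of_add_eq {c g : ℕ → ℝ} (hc : ∀ k, 0 ≤ c k) (hg : ∀ k, 0 ≤ g k)
    (h : ∀ k, c (k + 1) + g (k + 1) = g k) : Tendsto c atTop (𝓝 0) := by
  have hsum : ∀ n, ∑ k ∈ range n, c (k + 1) ≤ g 0 := fun n => calc
    ∑ k ∈ range n, c (k + 1) = ∑ k ∈ range n, (g k - g (k + 1)) :=
      sum_congr rfl fun k _ => eq_sub_of_add_eq (h k)
    _ = g 0 - g n := sum_range_sub' g n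
    _ ≤ g 0 := sub_le_self _ (hg n)
  have := (summable_of_sum_range_le (fun k => hc (k + 1)) hsum).tendsto_atTop_zero
  exact (tendsto_add_atTop_iff_nat 1).mp this

theorem rpow_neg_sub_rpow_neg_of_add_rpow_eq {α x y : ℝ} (hα : α ≠ 1) (hx : 0 < x) (hy : 0 ≤ y)
    (h : x + x ^ (1 - α) = y ^ (1 - α)) :
    x ^ (-α) - y ^ (-α) = (1 - (1 + x ^ α) ^ (-(α / (1 - α)))) / x ^ α := by
  have hexp : (1 - α) * -(α / (1 - α)) = -α := by
    field_simp [sub_ne_zero.mpr hα.symm]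
  have hfactor : y ^ (1 - α) = x ^ (1 - α) * (1 + x ^ α) := by
    rw [mul_add, mul_one, ← rpow_add hx, sub_add_cancel, rpow_one, ← h, add_comm]
  have hy' : y ^ (-α) = x ^ (-α) * (1 + x ^ α) ^ (-(α / (1 - α))) := by
    rw [← hexp, rpow_mul hy, hfactor, mul_rpow (by positivity) (by positivity), ← rpow_mul hx.le]
  rw [hy', rpow_neg hx.le]
  ring

theorem rpow_neg_div_rpow_neg_one_div {α x y : ℝ} (hα : α ≠ 0) (hx : 0 < x) (hy : 0 < y) :
    (x ^ (-α) / y) ^ (-(1 / α)) = y ^ (1 / α) * x := by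
  rw [div_rpow (rpow_nonneg hx.le _) hy.le, ← rpow_mul hx.le, neg_mul_neg, mul_one_div_cancel hα,
    rpow_one, rpow_neg hy.le, div_inv_eq_mul, mul_comm]

theorem C_k_asymptotics_general (α : ℝ) (hα : 0 < α) (hα1 : α < 1) (C : ℕ → ℝ)
    (hCpos : ∀ k : ℕ, 0 < C (k + 1))
    (hCrec : ∀ k : ℕ, C (k + 1) + C (k + 1) ^ (1 - α) = C k ^ (1 - α)) :
    Tendsto (fun k : ℕ => (k : ℝ) ^ (1 / α) * C k) atTop
      (nhds (((1 - α) / α) ^ (1 / α))) := by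
  set β := α / (1 - α)
  have hβ : 0 < β := div_pos hα (sub_pos.mpr hα1)
  have hC_zero : Tendsto C atTop (𝓝 0) := (tendsto_add_atTop_iff_nat 1).mp <|
    tendsto_zero_of_add_eq (fun k => (hCpos k).le) (fun k => rpow_nonneg (hCpos k).le _)
      fun k => hCrec (k + 1)
  have ht : Tendsto (fun k => C (k + 2) ^ α) atTop (𝓝[≠] 0) :=
    tendsto_nhdsWithin_of_tendsto_nhds_of_eventually_within _
      (zero_rpow hα.ne' ▸ (continuousAt_rpow_const 0 α (Or.inr hα.le)).tendsto.comp
        (hC_zero.comp (tendsto_add_atTop_nat 2)))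
      (Eventually.of_forall fun k => (rpow_pos_of_pos (hCpos (k + 1)) α).ne')
  have hD_sub : Tendsto (fun k => C (k + 2) ^ (-α) - C (k + 1) ^ (-α)) atTop (𝓝 β) :=
    ((tendsto_one_sub_one_add_rpow_neg_div β).comp ht).congr fun k =>
      (rpow_neg_sub_rpow_neg_of_add_rpow_eq hα1.ne (hCpos (k + 1)) (hCpos k).le
        (hCrec (k + 1))).symm
  have hD_div : Tendsto (fun n : ℕ => C n ^ (-α) / n) atTop (𝓝 β) :=
    tendsto_div_natCast_of_tendsto_sub ((tendsto_add_atTop_iff_nat 1).mp hD_sub)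
  have hlim : β ^ (-(1 / α)) = ((1 - α) / α) ^ (1 / α) := by
    rw [rpow_neg hβ.le, ← inv_rpow hβ.le, inv_div]
  refine hlim ▸ ((continuousAt_rpow_const β _ (Or.inl hβ.ne')).tendsto.comp hD_div).congr' ?_
  filter_upwards [eventually_ge_atTop 1] with n hn
  obtain ⟨k, rfl⟩ := Nat.exists_eq_add_of_le' hn
  exact rpow_neg_div_rpow_neg_one_div hα.ne' (hCpos k) (Nat.cast_pos.mpr k.succ_pos)

theorem C_k_asymptotics (α : ℝ) (hα : 0 < α) (hα1 : α < 1) (C : ℕ → ℝ)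
    (hC0 : C 0 = 1)
    (hCpos : ∀ k : ℕ, 0 < C (k + 1))
    (hCrec : ∀ k : ℕ, C (k + 1) + C (k + 1) ^ (1 - α) = C k ^ (1 - α)) :
    Tendsto (fun k : ℕ => (k : ℝ) ^ (1 / α) * C k) atTop
      (nhds (((1 - α) / α) ^ (1 / α))) :=
  C_k_asymptotics_general α hα hα1 C hCpos hCrec
end

section
/- Let 0 < α < 1 and for each integer k ≥ 2 define x_k = ( k·(1 + 1/(k-1))^{(1-α)/α} − k )^{1/α}. Then the sequence (x_k)_{k≥2} is strictly decreasing and converges to ((1-α)/α)^{1/α} as k → ∞. -/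
/-!
With `p = 1/α > 1` and `t = 1/(k-1)`, one has `x_k ^ α = ((1+t)^p - 1)/t - 1`: the slope of the
chord of the strictly convex function `x ↦ x^p` between `1` and `1+t`, minus one. That slope
decreases strictly as `t = 1/(k-1)` decreases and tends to the derivative `p` at `1`, so `x_k ^ α`
decreases strictly to `p - 1 = (1-α)/α`.
-/

open Real Filter Set Topology

theorem strictMonoOn_rpow_secant {p : ℝ} (hp : 1 < p) :
    StrictMonoOn (fun t : ℝ => ((1 + t) ^ p - 1) / t) (Ioi 0) := by
  intro s (hs : 0 < s) t _ hst
  have key := (strictConvexOn_rpow hp).secant_strict_mono (a := 1) (x := 1 + s) (y := 1 + t)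
    (by norm_num) (by simp only [mem_Ici]; linarith) (by simp only [mem_Ici]; linarith)
    (by linarith) (by linarith) (by linarith)
  simpa only [one_rpow, add_sub_cancel_left] using key

theorem lt_rpow_secant {p : ℝ} (hp : 1 < p) {t : ℝ} (ht : 0 < t) :
    p < ((1 + t) ^ p - 1) / t := by
  rw [lt_div_iff₀ ht]
  linarith [one_add_mul_self_lt_rpow_one_add (by linarith : (-1 : ℝ) ≤ t) ht.ne' hp]

theorem tendsto_rpow_secant (p : ℝ) :
    Tendsto (fun t : ℝ => ((1 + t) ^ p - 1) / t) (𝓝[≠] 0) (𝓝 p) := by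
  have hderiv : HasDerivAt (fun x : ℝ => x ^ p) p 1 := by
    simpa using hasDerivAt_rpow_const (x := 1) (p := p) (Or.inl one_ne_zero)
  simpa only [one_rpow, smul_eq_mul, inv_mul_eq_div] using
    hasDerivAt_iff_tendsto_slope_zero.mp hderiv

theorem mul_one_add_one_div_rpow_sub_eq_secant (q : ℝ) {k : ℝ} (hk : 1 < k) :
    k * (1 + 1 / (k - 1)) ^ q - k = ((1 + 1 / (k - 1)) ^ (q + 1) - 1) / (1 / (k - 1)) - 1 := by
  have hk1 : 0 < k - 1 := by linarith
  have hpos : 0 < 1 + 1 / (k - 1) := by positivity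
  rw [rpow_add hpos, rpow_one]
  field_simp
  ring

theorem lt_mul_one_add_one_div_rpow_sub {q : ℝ} (hq : 0 < q) {k : ℝ} (hk : 1 < k) :
    q < k * (1 + 1 / (k - 1)) ^ q - k := by
  rw [mul_one_add_one_div_rpow_sub_eq_secant q hk]
  linarith [lt_rpow_secant (by linarith : 1 < q + 1) (one_div_pos.mpr (by linarith : 0 < k - 1))]

theorem strictAntiOn_mul_one_add_one_div_rpow_sub {q : ℝ} (hq : 0 < q) :
    StrictAntiOn (fun k : ℝ => k * (1 + 1 / (k - 1)) ^ q - k) (Ioi 1) := by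
  intro k (hk : 1 < k) l (hl : 1 < l) hkl
  simp only [mul_one_add_one_div_rpow_sub_eq_secant q hk,
    mul_one_add_one_div_rpow_sub_eq_secant q hl, sub_lt_sub_iff_right]
  exact strictMonoOn_rpow_secant (by linarith) (one_div_pos.mpr (by linarith : 0 < l - 1))
    (one_div_pos.mpr (by linarith : 0 < k - 1))
    (one_div_lt_one_div_of_lt (by linarith) (by linarith))

theorem tendsto_mul_one_add_one_div_rpow_sub (q : ℝ) :
    Tendsto (fun k : ℝ => k * (1 + 1 / (k - 1)) ^ q - k) atTop (𝓝 q) := by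
  have hinv : Tendsto (fun k : ℝ => 1 / (k - 1)) atTop (𝓝[≠] 0) := by
    simpa only [one_div, Function.comp_def, id, ← sub_eq_add_neg] using
      (tendsto_inv_atTop_nhdsGT_zero.mono_right (nhdsGT_le_nhdsNE 0)).comp
        (tendsto_atTop_add_const_right atTop (-1 : ℝ) tendsto_id)
  have hsecant := ((tendsto_rpow_secant (q + 1)).comp hinv).sub_const 1
  rw [add_sub_cancel_right] at hsecant
  refine hsecant.congr' ?_
  filter_upwards [eventually_gt_atTop 1] with k hk
  exact (mul_one_add_one_div_rpow_sub_eq_secant q hk).symm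

theorem x_k_decreasing_limit (α : ℝ) (hα : 0 < α) (hα1 : α < 1) :
    (∀ k : ℕ, 2 ≤ k →
      ((((k : ℝ) + 1) * (1 + 1 / ((k : ℝ) + 1 - 1)) ^ ((1 - α) / α) - ((k : ℝ) + 1)) ^ (1 / α))
        < (((k : ℝ) * (1 + 1 / ((k : ℝ) - 1)) ^ ((1 - α) / α) - (k : ℝ)) ^ (1 / α))) ∧
    Tendsto (fun k : ℕ =>
        (((k : ℝ) * (1 + 1 / ((k : ℝ) - 1)) ^ ((1 - α) / α) - (k : ℝ)) ^ (1 / α)))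
      atTop (nhds (((1 - α) / α) ^ (1 / α))) := by
  have hq : 0 < (1 - α) / α := div_pos (by linarith) hα
  refine ⟨fun k hk => ?_, ?_⟩
  · have hk1 : (1 : ℝ) < k := by exact_mod_cast hk
    have hsucc : (1 : ℝ) < k + 1 := by linarith
    exact rpow_lt_rpow (hq.trans (lt_mul_one_add_one_div_rpow_sub hq hsucc)).le
      (strictAntiOn_mul_one_add_one_div_rpow_sub hq hk1 hsucc (lt_add_one _)) (by positivity)
  · exact ((tendsto_mul_one_add_one_div_rpow_sub _).comp tendsto_natCast_atTop_atTop).rpow_const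
      (Or.inl hq.ne')
end

section
/- Let s > 1. Then ∫_0^∞ (1 + y^{s-1})^{-s/(s-1)} dy = 1; indeed, an antiderivative of y ↦ (1 + y^{s-1})^{-s/(s-1)} on (0,∞) is y ↦ (1 + y^{1-s})^{1/(1-s)}. -/
open Real MeasureTheory Set Filter Topology

/-!
Write `p = 1 - s < 0` and `F u = (1 + u ^ p) ^ (1 / p)`. Factoring
`1 + y ^ p = y ^ p (1 + y ^ (-p))` in the chain rule makes the powers of `y` cancel, so
`F' y = (1 + y ^ (-p)) ^ ((1 - p) / p)`, which is the (nonnegative) integrand. Since `F → 0` at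
`0⁺` and `F → 1` at `∞`, the integral is `1 - 0`.
-/

theorem integral_Ioi_of_hasDerivAt_of_nonneg_of_tendsto_nhdsGT {f f' : ℝ → ℝ} {a l₀ l : ℝ}
    (hderiv : ∀ x ∈ Ioi a, HasDerivAt f (f' x) x) (hf' : ∀ x ∈ Ioi a, 0 ≤ f' x)
    (ha : Tendsto f (𝓝[>] a) (𝓝 l₀)) (htop : Tendsto f atTop (𝓝 l)) :
    ∫ x in Ioi a, f' x = l - l₀ := by
  classical
  set g := Function.update f a l₀
  have hg : ∀ x ∈ Ioi a, g =ᶠ[𝓝 x] f := fun x hx =>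
    (eventually_ne_nhds (ne_of_gt hx)).mono fun u hu => Function.update_of_ne hu _ _
  have hcont : ContinuousWithinAt g (Ici a) a := by
    rwa [continuousWithinAt_update_same, Ici_sdiff_left]
  have hgtop : Tendsto g atTop (𝓝 l) :=
    htop.congr' ((eventually_gt_atTop a).mono fun x hx => ((hg x hx).self_of_nhds).symm)
  rw [integral_Ioi_of_hasDerivAt_of_nonneg hcont
    (fun x hx => (hderiv x hx).congr_of_eventuallyEq (hg x hx)) hf' hgtop]
  simp [g]

lemma one_add_rpow_eq_rpow_mul_one_add_rpow_neg {y : ℝ} (hy : 0 < y) (p : ℝ) :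
    1 + y ^ p = y ^ p * (1 + y ^ (-p)) := by
  rw [mul_add, mul_one, ← rpow_add hy, add_neg_cancel, rpow_zero, add_comm]

theorem hasDerivAt_one_add_rpow_rpow_inv {p y : ℝ} (hp : p ≠ 0) (hy : 0 < y) :
    HasDerivAt (fun u => (1 + u ^ p) ^ (1 / p)) ((1 + y ^ (-p)) ^ ((1 - p) / p)) y := by
  have hbase : 0 < 1 + y ^ p := by positivity
  have hchain := (hasDerivAt_rpow_const (p := 1 / p) (Or.inl hbase.ne')).comp y
    ((hasDerivAt_rpow_const (p := p) (Or.inl hy.ne')).const_add 1)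
  refine hchain.congr_deriv ?_
  have hexp : 1 / p - 1 = (1 - p) / p := by field_simp
  rw [hexp, one_add_rpow_eq_rpow_mul_one_add_rpow_neg hy, mul_rpow (by positivity) (by positivity),
    ← rpow_mul hy.le, show p * ((1 - p) / p) = 1 - p by field_simp]
  have hcancel : y ^ (1 - p) * y ^ (p - 1) = 1 := by
    rw [← rpow_add hy, sub_add_sub_cancel', sub_self, rpow_zero]
  calc _ = p / p * (y ^ (1 - p) * y ^ (p - 1)) * (1 + y ^ (-p)) ^ ((1 - p) / p) := by ring
    _ = _ := by rw [div_self hp, hcancel, one_mul, one_mul]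

theorem tendsto_one_add_rpow_rpow_inv_atTop {p : ℝ} (hp : p < 0) :
    Tendsto (fun u : ℝ => (1 + u ^ p) ^ (1 / p)) atTop (𝓝 1) := by
  have hpow : Tendsto (fun u : ℝ => 1 + u ^ p) atTop (𝓝 1) := by
    simpa only [neg_neg, add_zero] using (tendsto_rpow_neg_atTop (neg_pos.2 hp)).const_add 1
  simpa only [one_rpow, Function.comp_def] using
    (continuousAt_rpow_const 1 (1 / p) (Or.inl one_ne_zero)).tendsto.comp hpow

theorem tendsto_one_add_rpow_rpow_inv_nhdsGT_zero {p : ℝ} (hp : p < 0) :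
    Tendsto (fun u : ℝ => (1 + u ^ p) ^ (1 / p)) (𝓝[>] 0) (𝓝 0) := by
  have hpow : Tendsto (fun u : ℝ => 1 + u ^ p) (𝓝[>] 0) atTop :=
    tendsto_atTop_add_const_left _ 1 (tendsto_rpow_neg_nhdsGT_zero hp)
  simpa only [neg_neg, Function.comp_def] using
    (tendsto_rpow_neg_atTop (neg_pos.2 (one_div_neg.2 hp))).comp hpow

theorem integral_eq_one_and_antiderivative (s : ℝ) (hs : 1 < s) :
    (∀ y : ℝ, 0 < y →
      HasDerivAt (fun u : ℝ => (1 + u ^ (1 - s)) ^ (1 / (1 - s)))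
        ((1 + y ^ (s - 1)) ^ (-s / (s - 1))) y) ∧
    (∫ y in Ioi (0 : ℝ), (1 + y ^ (s - 1)) ^ (-s / (s - 1)) = 1) := by
  have hp : 1 - s < 0 := by linarith
  have hexp : (1 - (1 - s)) / (1 - s) = -s / (s - 1) := by
    rw [sub_sub_cancel, ← neg_sub s 1, div_neg, neg_div]
  have hderiv : ∀ y : ℝ, 0 < y → HasDerivAt (fun u : ℝ => (1 + u ^ (1 - s)) ^ (1 / (1 - s)))
      ((1 + y ^ (s - 1)) ^ (-s / (s - 1))) y := fun y hy => by
    simpa only [neg_sub, hexp] using hasDerivAt_one_add_rpow_rpow_inv hp.ne hy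
  refine ⟨hderiv, ?_⟩
  rw [integral_Ioi_of_hasDerivAt_of_nonneg_of_tendsto_nhdsGT hderiv
    (fun y (hy : 0 < y) => by positivity) (tendsto_one_add_rpow_rpow_inv_nhdsGT_zero hp)
    (tendsto_one_add_rpow_rpow_inv_atTop hp), sub_zero]
end
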